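/- arXiv:1805.03185 — 2 statements merged into one kernel-verified Lean document; each statement's English description precedes it below -/
import Mathlib

section
/- Let X and Y be Polish spaces with μ a nonatomic Borel probability measure on X. Then the set of measures of the form μ(dx) δ_{φ(x)}(dy) with φ : X → Y Borel measurable is weakly dense in the set Π(μ) of all Borel probability measures on X × Y with first marginal μ. -/
/-!
Fix `δ > 0` and partition `X` and `Y` into countably many Borel cells `C j`, `B k` of diameter at
most `δ`. Since `X` is Borel isomorphic to a subset of `ℝ`, where a nonatomic measure can be cut
along its distribution function into pieces of any prescribed masses, each `C j` splits into
disjoint Borel pieces `A j k` with `μ (A j k) = P (C j ×ˢ B k)`. Sending `A j k` to a point of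
`B k` defines `φ`, and the graph measure `μ.map (fun x => (x, φ x))` then dominates `P` on every
product cell. Between probability measures this one-sided comparison already bounds the
Lévy–Prokhorov distance by `δ`, and that distance metrizes weak convergence.
-/

open MeasureTheory Set Filter Topology Function Metric TopologicalSpace
open scoped ENNReal

theorem tendsto_measure_Iic_atBot {α : Type*} [LinearOrder α] [NoMinOrder α]
    [TopologicalSpace α] [OrderClosedTopology α] [MeasurableSpace α] [OpensMeasurableSpace α]
    [(atBot : Filter α).IsCountablyGenerated] (ρ : Measure α) [IsFiniteMeasure ρ] :
    Tendsto (fun t => ρ (Iic t)) atBot (𝓝 0) := by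
  rcases isEmpty_or_nonempty α with hα | ⟨⟨a⟩⟩
  · exact tendsto_of_isEmpty
  have h := tendsto_measure_iInter_atBot (μ := ρ) (fun t => measurableSet_Iic.nullMeasurableSet)
    monotone_Iic ⟨a, measure_ne_top ρ _⟩
  rwa [iInter_Iic_eq_empty_iff.2 (by simp [not_bddBelow_univ]), measure_empty] at h

theorem measure_setOf_measure_Iic_lt (ρ : Measure ℝ) [IsFiniteMeasure ρ] [NullSingletonClass ρ]
    {s : ℝ≥0∞} (hs : s ≤ ρ univ) : ρ {t | ρ (Iic t) < s} = s := by
  set L := {t | ρ (Iic t) < s}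
  have hL : IsLowerSet L := fun a b hba hb => (measure_mono (Iic_subset_Iic.2 hba)).trans_lt hb
  rcases L.eq_empty_or_nonempty with hempty | hne
  · have hle : ∀ t, s ≤ ρ (Iic t) := fun t => not_lt.1 fun ht => hempty.subset ht
    rw [hempty, measure_empty,
      le_antisymm (ge_of_tendsto' (tendsto_measure_Iic_atBot ρ) hle) bot_le]
  by_cases hbdd : BddAbove L
  swap
  · have hall : ∀ t, t ∈ L := fun t =>
      let ⟨t', ht', htt'⟩ := not_bddAbove_iff.1 hbdd t; hL htt'.le ht'
    rw [eq_univ_of_forall hall]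
    exact le_antisymm (le_of_tendsto' (tendsto_measure_Iic_atTop ρ) fun t => (hall t).le) hs
  -- `L` is squeezed between `Iio c` and `Iic c`, which have the same measure as `ρ` has no atoms.
  set c := sSup L
  have hIio : Iio c ⊆ L := fun t ht =>
    let ⟨t', ht', htt'⟩ := exists_lt_of_lt_csSup hne ht; hL htt'.le ht'
  have hIic : L ⊆ Iic c := fun t ht => le_csSup hbdd ht
  have hle : ρ (Iio c) ≤ s := by
    have hunion : (⋃ t : Iio c, Iic (t : ℝ)) = Iio c :=
      Subset.antisymm (iUnion_subset fun t => Iic_subset_Iio.2 t.2) fun x hx =>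
        let ⟨t, hxt, htc⟩ := exists_between hx; mem_iUnion.2 ⟨⟨t, htc⟩, hxt.le⟩
    have hmono : Monotone fun t : Iio c => Iic (t : ℝ) := fun a b hab => Iic_subset_Iic.2 hab
    rw [← hunion, hmono.measure_iUnion]
    exact iSup_le fun t => (hIio t.2).le
  have hge : s ≤ ρ (Iic c) := by
    have hinter : (⋂ r > c, Iic r) = Iic c := by
      ext x
      simp only [mem_iInter, mem_Iic]
      exact ⟨fun h => le_of_forall_gt_imp_ge_of_dense h, fun h r hr => h.trans hr.le⟩
    have h := tendsto_measure_biInter_gt (μ := ρ) (fun r _ => measurableSet_Iic.nullMeasurableSet)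
      (fun i j _ hij => Iic_subset_Iic.2 hij) ⟨c + 1, by linarith, measure_ne_top ρ _⟩
    rw [hinter] at h
    refine ge_of_tendsto h ?_
    filter_upwards [self_mem_nhdsWithin] with t (ht : c < t)
    exact not_lt.1 fun htL => (hIic htL).not_gt ht
  have hIio_eq : ρ (Iio c) = ρ (Iic c) := measure_congr Iio_ae_eq_Iic
  exact le_antisymm ((measure_mono hIic).trans (hIio_eq ▸ hle))
    (hge.trans (hIio_eq ▸ measure_mono hIio))

theorem Real.exists_pairwise_disjoint_measure_eq_of_tsum_le (ρ : Measure ℝ) [IsFiniteMeasure ρ]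
    [NullSingletonClass ρ] (c : ℕ → ℝ≥0∞) (hc : ∑' k, c k ≤ ρ univ) :
    ∃ A : ℕ → Set ℝ, (∀ k, MeasurableSet (A k)) ∧ Pairwise (Disjoint on A) ∧
      ∀ k, ρ (A k) = c k := by
  set S : ℕ → ℝ≥0∞ := fun k => ∑ l ∈ Finset.range k, c l
  have hS_mono : Monotone S := fun a b hab =>
    Finset.sum_le_sum_of_subset (Finset.range_subset_range.2 hab)
  have hS_le : ∀ k, S k ≤ ρ univ := fun k => (ENNReal.sum_le_tsum _).trans hc
  set G : ℝ → ℝ≥0∞ := fun t => ρ (Iic t)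
  have hG : Measurable G := Monotone.measurable fun a b hab => measure_mono (Iic_subset_Iic.2 hab)
  refine ⟨fun k => G ⁻¹' Ico (S k) (S (k + 1)), fun k => hG measurableSet_Ico,
    fun i j hij => (hS_mono.pairwise_disjoint_on_Ico_succ hij).preimage G, fun k => ?_⟩
  have hsub : {t | G t < S k} ⊆ {t | G t < S (k + 1)} := fun t ht =>
    ht.trans_le (hS_mono k.le_succ)
  have hdiff : G ⁻¹' Ico (S k) (S (k + 1)) = {t | G t < S (k + 1)} \ {t | G t < S k} := by
    ext t
    simp only [mem_preimage, mem_Ico, Set.mem_sdiff, mem_ofPred_eq, not_lt, and_comm]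
  show ρ (G ⁻¹' _) = c k
  rw [hdiff, measure_sdiff hsub (measurableSet_lt hG measurable_const).nullMeasurableSet
      (measure_ne_top ρ _), measure_setOf_measure_Iic_lt ρ (hS_le _),
    measure_setOf_measure_Iic_lt ρ (hS_le _),
    show S (k + 1) = S k + c k from Finset.sum_range_succ c k]
  exact ENNReal.add_sub_cancel_left (ne_top_of_le_ne_top (measure_ne_top ρ _) (hS_le k))

theorem exists_pairwise_disjoint_measure_eq_of_tsum_le {X : Type*} [MeasurableSpace X]
    [StandardBorelSpace X] (μ : Measure X) [IsFiniteMeasure μ] [NullSingletonClass μ]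
    (c : ℕ → ℝ≥0∞) (hc : ∑' k, c k ≤ μ univ) :
    ∃ A : ℕ → Set X, (∀ k, MeasurableSet (A k)) ∧ Pairwise (Disjoint on A) ∧
      ∀ k, μ (A k) = c k := by
  obtain ⟨e, he⟩ := exists_measurableEmbedding_real X
  have : NullSingletonClass (μ.map e) := ⟨fun r => by
    rw [he.map_apply]
    exact Set.Subsingleton.measure_zero (fun a ha b hb => he.injective (ha.trans hb.symm)) μ⟩
  obtain ⟨A, hAm, hAd, hμA⟩ := Real.exists_pairwise_disjoint_measure_eq_of_tsum_le (μ.map e) c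
    (by rwa [he.map_apply, preimage_univ])
  exact ⟨fun k => e ⁻¹' A k, fun k => he.measurable (hAm k),
    fun i j hij => (hAd hij).preimage e, fun k => by rw [← hμA k, he.map_apply]⟩

theorem exists_measurable_measure_prod_le_map_graph {X Y : Type*} [MeasurableSpace X]
    [StandardBorelSpace X] [MeasurableSpace Y] [Nonempty Y] (μ : Measure X) [IsFiniteMeasure μ]
    [NullSingletonClass μ] (P : Measure (X × Y)) (hP : P.map Prod.fst = μ) {C : ℕ → Set X}
    {B : ℕ → Set Y} (hCm : ∀ j, MeasurableSet (C j)) (hCd : Pairwise (Disjoint on C))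
    (hBm : ∀ k, MeasurableSet (B k)) (hBd : Pairwise (Disjoint on B)) :
    ∃ φ : X → Y, Measurable φ ∧
      ∀ j k, P (C j ×ˢ B k) ≤ μ.map (fun x => (x, φ x)) (C j ×ˢ B k) := by
  have hsum : ∀ j, ∑' k, P (C j ×ˢ B k) ≤ μ.restrict (C j) univ := fun j => by
    rw [← measure_iUnion (fun k l hkl => disjoint_prod.2 (Or.inr (hBd hkl)))
      fun k => (hCm j).prod (hBm k), ← prod_iUnion, Measure.restrict_apply_univ, ← hP,
      Measure.map_apply measurable_fst (hCm j), ← prod_univ]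
    exact measure_mono (prod_mono_right (subset_univ _))
  choose A hAm hAd hμA using fun j =>
    exists_pairwise_disjoint_measure_eq_of_tsum_le (μ.restrict (C j)) _ (hsum j)
  set D : ℕ × ℕ → Set X := fun p => A p.1 p.2 ∩ C p.1
  have hDd : Pairwise (Disjoint on D) := by
    rintro ⟨j, k⟩ ⟨j', k'⟩ hne
    rcases eq_or_ne j j' with rfl | hj
    · exact ((hAd j) fun hk => hne (congrArg _ hk)).mono inter_subset_left inter_subset_left
    · exact (hCd hj).mono inter_subset_right inter_subset_right
  have hy : ∀ k, ∃ y : Y, (B k).Nonempty → y ∈ B k := fun k =>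
    (B k).eq_empty_or_nonempty.elim (fun _ => ⟨Classical.arbitrary Y, by simp_all⟩)
      fun ⟨y, hy⟩ => ⟨y, fun _ => hy⟩
  choose y hy using hy
  obtain ⟨φ, hφ, hφD⟩ := exists_measurable_piecewise D
    (fun p => (hAm p.1 p.2).inter (hCm p.1)) (fun p _ => y p.2) (fun _ => measurable_const)
    fun p q hpq x hx => ((hDd hpq).ne_of_mem hx.1 hx.2 rfl).elim
  refine ⟨φ, hφ, fun j k => ?_⟩
  rcases (B k).eq_empty_or_nonempty with hB | hB
  · simp [hB]
  have hDφ : D (j, k) ⊆ (fun x => (x, φ x)) ⁻¹' (C j ×ˢ B k) := fun x hx =>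
    ⟨hx.2, show φ x ∈ B k from hφD (j, k) hx ▸ hy k hB⟩
  calc P (C j ×ˢ B k) = μ (D (j, k)) := by rw [← hμA j k, Measure.restrict_apply (hAm j k)]
    _ ≤ μ.map (fun x => (x, φ x)) (C j ×ˢ B k) := by
      rw [Measure.map_apply (f := fun x => (x, φ x)) (by fun_prop) ((hCm j).prod (hBm k))]
      exact measure_mono hDφ

theorem pairwise_disjoint_prod {ι ι' α β : Type*} {s : ι → Set α} {t : ι' → Set β}
    (hs : Pairwise (Disjoint on s)) (ht : Pairwise (Disjoint on t)) :
    Pairwise (Disjoint on fun p : ι × ι' => s p.1 ×ˢ t p.2) := fun _ _ hpq =>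
  disjoint_prod.2 <| (not_and_or.1 fun h => hpq (Prod.ext h.1 h.2)).imp (@hs _ _) (@ht _ _)

theorem levyProkhorovEDist_le_of_measure_le_of_partition {Ω ι : Type*} [PseudoMetricSpace Ω]
    [MeasurableSpace Ω] [OpensMeasurableSpace Ω] [Countable ι] (μ ν : Measure Ω)
    [IsProbabilityMeasure μ] [IsProbabilityMeasure ν] {δ : ℝ} {T : ι → Set Ω}
    (hTm : ∀ i, MeasurableSet (T i)) (hTd : Pairwise (Disjoint on T)) (hTu : ⋃ i, T i = univ)
    (hTδ : ∀ i, ∀ x ∈ T i, ∀ y ∈ T i, dist x y ≤ δ)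
    (hle : ∀ i, μ (T i) ≤ ν (T i)) :
    levyProkhorovEDist μ ν ≤ ENNReal.ofReal δ := by
  refine levyProkhorovEDist_le_of_forall_le μ ν _ fun ε B hδε hε _ => le_add_right ?_
  have hδε' : δ < ε.toReal := by
    rcases lt_or_ge δ 0 with hδ | hδ
    · exact hδ.trans_le ENNReal.toReal_nonneg
    · exact (ENNReal.ofReal_lt_iff_lt_toReal hδ hε.ne).1 hδε
  set J := {i | (T i ∩ B).Nonempty}
  have hB : B ⊆ ⋃ i ∈ J, T i := fun x hx =>
    let ⟨i, hi⟩ := mem_iUnion.1 (hTu.symm ▸ mem_univ x : x ∈ ⋃ i, T i)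
    mem_biUnion ⟨x, hi, hx⟩ hi
  have hthick : (⋃ i ∈ J, T i) ⊆ thickening ε.toReal B := by
    refine iUnion₂_subset fun i ⟨b, hbT, hbB⟩ x hx => mem_thickening_iff.2 ⟨b, hbB, ?_⟩
    exact (hTδ i x hx b hbT).trans_lt hδε'
  have hmeas : ∀ ρ : Measure Ω, ρ (⋃ i ∈ J, T i) = ∑' i : J, ρ (T i) := fun ρ =>
    measure_biUnion J.to_countable (fun i _ j _ hij => hTd hij) fun i _ => hTm i
  calc μ B ≤ μ (⋃ i ∈ J, T i) := measure_mono hB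
    _ = ∑' i : J, μ (T i) := hmeas μ
    _ ≤ ∑' i : J, ν (T i) := ENNReal.tsum_le_tsum fun i => hle i
    _ = ν (⋃ i ∈ J, T i) := (hmeas ν).symm
    _ ≤ ν (thickening ε.toReal B) := measure_mono hthick

theorem ProbabilityMeasure.mem_closure_of_forall_levyProkhorovEDist_le {Ω : Type*}
    [PseudoMetricSpace Ω] [SeparableSpace Ω] [MeasurableSpace Ω] [OpensMeasurableSpace Ω]
    {S : Set (ProbabilityMeasure Ω)} {P : ProbabilityMeasure Ω}
    (h : ∀ δ : ℝ, 0 < δ →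
      ∃ Q ∈ S, levyProkhorovEDist (P : Measure Ω) Q ≤ ENNReal.ofReal δ) :
    P ∈ closure S := by
  let e := LevyProkhorov.probabilityMeasureHomeomorph (Ω := Ω)
  rw [← e.injective.mem_set_image, e.image_closure, Metric.mem_closure_iff]
  intro ε hε
  obtain ⟨Q, hQS, hPQ⟩ := h (ε / 2) (half_pos hε)
  refine ⟨e Q, mem_image_of_mem e hQS, ?_⟩
  calc dist (e P) (e Q) = (levyProkhorovEDist (P : Measure Ω) Q).toReal := rfl
    _ ≤ ε / 2 := ENNReal.toReal_le_of_le_ofReal (half_pos hε).le hPQ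
    _ < ε := half_lt_self hε

/-- Proposition 2.3(i): if `μ` is nonatomic, the measures `μ(dx) δ_{φ(x)}(dy)` with `φ`
measurable are weakly dense in the set `Π(μ)` of joint laws with first marginal `μ`. -/
theorem stmt4 {X Y : Type*}
    [TopologicalSpace X] [PolishSpace X] [MeasurableSpace X] [BorelSpace X]
    [TopologicalSpace Y] [PolishSpace Y] [MeasurableSpace Y] [BorelSpace Y]
    (μ : ProbabilityMeasure X)
    (hμ : ∀ x : X, (μ : Measure X) {x} = 0)
    (P : ProbabilityMeasure (X × Y))
    (h1 : (P : Measure (X × Y)).map Prod.fst = (μ : Measure X)) :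
    P ∈ closure {Q : ProbabilityMeasure (X × Y) |
      ∃ φ : X → Y, Measurable φ ∧
        (Q : Measure (X × Y)) = (μ : Measure X).map (fun x => (x, φ x))} := by
  let := upgradeIsCompletelyMetrizable X
  let := upgradeIsCompletelyMetrizable Y
  have : NullSingletonClass (μ : Measure X) := ⟨hμ⟩
  have : Nonempty Y := P.nonempty.map Prod.snd
  refine ProbabilityMeasure.mem_closure_of_forall_levyProkhorovEDist_le fun δ hδ => ?_
  obtain ⟨C, hCm, hCb, hCδ, hCu, hCd⟩ :=
    SeparableSpace.exists_measurable_partition_diam_le X hδ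
  obtain ⟨B, hBm, hBb, hBδ, hBu, hBd⟩ :=
    SeparableSpace.exists_measurable_partition_diam_le Y hδ
  obtain ⟨φ, hφ, hle⟩ :=
    exists_measurable_measure_prod_le_map_graph (μ : Measure X) P h1 hCm hCd hBm hBd
  have : IsProbabilityMeasure ((μ : Measure X).map fun x => (x, φ x)) :=
    Measure.isProbabilityMeasure_map (by fun_prop)
  refine ⟨⟨_, this⟩, ⟨φ, hφ, rfl⟩, ?_⟩
  show levyProkhorovEDist (P : Measure (X × Y)) ((μ : Measure X).map fun x => (x, φ x)) ≤ _
  refine levyProkhorovEDist_le_of_measure_le_of_partition _ _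
    (fun p : ℕ × ℕ => (hCm p.1).prod (hBm p.2)) (pairwise_disjoint_prod hCd hBd)
    (by rw [iUnion_prod, hCu, hBu, univ_prod_univ]) ?_ fun p => hle p.1 p.2
  rintro p x ⟨hx₁, hx₂⟩ x' ⟨hx₁', hx₂'⟩
  rw [Prod.dist_eq]
  exact max_le ((dist_le_diam_of_mem (hCb _) hx₁ hx₁').trans (hCδ _))
    ((dist_le_diam_of_mem (hBb _) hx₂ hx₂').trans (hBδ _))
end

section
/- Let X and Y be Polish spaces and μ a Borel probability measure on X. Then every P ∈ Π(μ) (Borel probability measure on X × Y with first marginal μ) admits a representation P(·) = ∫₀¹ P_u(·) du where, for each u ∈ [0,1], P_u(dx,dy) = μ(dx) δ_{f(x,u)}(dy) for a jointly measurable function f : X × [0,1] → Y. In particular, P is a mixture of measures concentrated on graphs of measurable functions. -/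
/-!
Disintegrating along the first coordinate writes `P = μ ⊗ κ`. Each conditional law `κ x` on the standard
Borel space `Y` is transported to a law on `ℝ` by a Borel embedding, and a law on `ℝ` is the
image of the uniform distribution on `(0, 1)` under its quantile function (inverse transform
sampling). The quantile function of `κ x` at `u` depends jointly measurably on `(x, u)`, because
`quantile < c` is decided by the cdf at rational points. Fubini then turns `μ ⊗ κ` into the
average over `u` of the graph measures of `x ↦ f x u`.
-/

open MeasureTheory Filter Topology

open ProbabilityTheory Set

-- Only meaningful for `v ∈ (0, 1)`; elsewhere the set may be empty or unbounded below.
noncomputable def quantile (ν : Measure ℝ) (v : ℝ) : ℝ := sInf {t | v ≤ cdf ν t}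

section Quantile

variable {ν : Measure ℝ} {v : ℝ}

lemma quantile_le_iff (hv : v ∈ Ioo 0 1) (t : ℝ) : quantile ν v ≤ t ↔ v ≤ cdf ν t := by
  set S := {t | v ≤ cdf ν t}
  have hne : S.Nonempty := ((tendsto_cdf_atTop ν).eventually (eventually_ge_nhds hv.2)).exists
  have hbdd : BddBelow S := by
    obtain ⟨s, hs⟩ := ((tendsto_cdf_atBot ν).eventually (eventually_lt_nhds hv.1)).exists
    refine ⟨s, fun t ht => le_of_not_gt fun hts => ?_⟩
    exact (ht.trans ((cdf ν).mono hts.le)).not_gt hs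
  -- right continuity of the cdf puts the infimum into `S`
  have hmem : sInf S ∈ S := by
    refine ge_of_tendsto (((cdf ν).right_continuous _).mono Ioi_subset_Ici_self).tendsto ?_
    filter_upwards [self_mem_nhdsWithin] with t ht
    obtain ⟨s, hs, hst⟩ := (csInf_lt_iff hbdd hne).1 ht
    exact hs.trans ((cdf ν).mono hst.le)
  exact ⟨fun h => hmem.trans ((cdf ν).mono h), fun h => csInf_le hbdd h⟩

lemma quantile_lt_iff_exists_rat (hv : v ∈ Ioo 0 1) (c : ℝ) :
    quantile ν v < c ↔ ∃ q : ℚ, (q : ℝ) < c ∧ v ≤ cdf ν q := by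
  constructor
  · intro h
    obtain ⟨q, hq, hqc⟩ := exists_rat_btwn h
    exact ⟨q, hqc, (quantile_le_iff hv q).1 hq.le⟩
  · rintro ⟨q, hqc, hq⟩
    exact ((quantile_le_iff hv q).2 hq).trans_lt hqc

end Quantile

-- Keeps the quantile parameter inside `(0, 1)` so that the sampling map is defined everywhere.
noncomputable def unitIooRetract (u : ℝ) : ℝ := if u ∈ Ioo 0 1 then u else 2⁻¹

lemma unitIooRetract_mem (u : ℝ) : unitIooRetract u ∈ Ioo 0 1 := by
  unfold unitIooRetract
  split_ifs with hu
  · exact hu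
  · norm_num

lemma measurable_unitIooRetract : Measurable unitIooRetract :=
  Measurable.ite measurableSet_Ioo measurable_id measurable_const

lemma ProbabilityTheory.Kernel.measurable_quantile {α : Type*} [MeasurableSpace α]
    (κ : Kernel α ℝ) [IsMarkovKernel κ] {v : α → ℝ} (hv : Measurable v)
    (hv01 : ∀ a, v a ∈ Ioo 0 1) : Measurable fun a => quantile (κ a) (v a) := by
  refine measurable_of_Iio fun c => ?_
  have hpre : (fun a => quantile (κ a) (v a)) ⁻¹' Iio c
      = ⋃ q : ℚ, {a | (q : ℝ) < c ∧ v a ≤ cdf (κ a) q} := by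
    ext a
    simp only [mem_preimage, mem_Iio, mem_iUnion]
    exact quantile_lt_iff_exists_rat (hv01 a) c
  have hcdf (t : ℝ) : Measurable fun a => cdf (κ a) t := by
    simp_rw [cdf_eq_real, measureReal_def]
    exact (κ.measurable_coe measurableSet_Iic).ennreal_toReal
  rw [hpre]
  exact .iUnion fun q => (MeasurableSet.const _).inter (measurableSet_le hv (hcdf q))

lemma measurable_quantile_unitIooRetract (ν : Measure ℝ) [IsProbabilityMeasure ν] :
    Measurable fun u => quantile ν (unitIooRetract u) :=
  (Kernel.const ℝ ν).measurable_quantile measurable_unitIooRetract unitIooRetract_mem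

lemma map_quantile_unitIooRetract (ν : Measure ℝ) [IsProbabilityMeasure ν] :
    (volume.restrict (Ioo 0 1)).map (fun u => quantile ν (unitIooRetract u)) = ν := by
  have hq := measurable_quantile_unitIooRetract ν
  refine Measure.ext_of_Iic _ _ fun t => ?_
  have hpre : (fun u => quantile ν (unitIooRetract u)) ⁻¹' Iic t ∩ Ioo 0 1
      = Iic (cdf ν t) ∩ Ioo 0 1 := by
    ext u
    simp only [mem_inter_iff, mem_preimage, mem_Iic, and_congr_left_iff]
    intro hu
    rw [unitIooRetract, if_pos hu, quantile_le_iff hu]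
  rw [Measure.map_apply hq measurableSet_Iic, Measure.restrict_apply (hq measurableSet_Iic), hpre,
    measure_congr ((ae_eq_refl _).inter Ioo_ae_eq_Ioc), inter_comm, Ioc_inter_Iic,
    min_eq_right (cdf_le_one ν t), Real.volume_Ioc, sub_zero, ofReal_cdf]

lemma ProbabilityTheory.Kernel.exists_measurable_map_volume_Ioo_eq {X Y : Type*}
    [MeasurableSpace X] [MeasurableSpace Y] [StandardBorelSpace Y] [Nonempty Y]
    (κ : Kernel X Y) [IsMarkovKernel κ] :
    ∃ g : X → ℝ → Y, Measurable (fun p : X × ℝ => g p.1 p.2) ∧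
      ∀ x, (volume.restrict (Ioo 0 1)).map (g x) = κ x := by
  obtain ⟨e, he⟩ := exists_measurableEmbedding_real Y
  obtain ⟨r, hr, hre⟩ := he.exists_measurable_extend measurable_id fun _ => inferInstance
  have := IsMarkovKernel.map κ he.measurable
  have hq : Measurable fun p : X × ℝ => quantile (κ.map e p.1) (unitIooRetract p.2) :=
    ((κ.map e).prodMkRight ℝ).measurable_quantile
      (measurable_unitIooRetract.comp measurable_snd) fun p => unitIooRetract_mem p.2
  refine ⟨fun x => r ∘ fun u => quantile (κ.map e x) (unitIooRetract u), hr.comp hq, fun x => ?_⟩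
  rw [← Measure.map_map hr (measurable_quantile_unitIooRetract _), map_quantile_unitIooRetract,
    κ.map_apply he.measurable, Measure.map_map hr he.measurable, hre, Measure.map_id]

lemma MeasureTheory.Measure.compProd_apply_eq_lintegral_map_graph {X Y Ω : Type*}
    [MeasurableSpace X] [MeasurableSpace Y] [MeasurableSpace Ω] (μ : Measure X) [SFinite μ]
    (ν : Measure Ω) [SFinite ν] (κ : Kernel X Y) [IsSFiniteKernel κ] {g : X → Ω → Y}
    (hg : Measurable fun p : X × Ω => g p.1 p.2) (hκ : ∀ x, ν.map (g x) = κ x)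
    {s : Set (X × Y)} (hs : MeasurableSet s) :
    (μ ⊗ₘ κ) s = ∫⁻ ω, (μ.map fun x => (x, g x ω)) s ∂ν := by
  have hG : Measurable fun p : X × Ω => (p.1, g p.1 p.2) := measurable_fst.prodMk hg
  calc (μ ⊗ₘ κ) s = ∫⁻ x, ν.map (g x) (Prod.mk x ⁻¹' s) ∂μ := by
        simp_rw [Measure.compProd_apply hs, hκ]
    _ = (μ.prod ν) ((fun p : X × Ω => (p.1, g p.1 p.2)) ⁻¹' s) := by
        rw [Measure.prod_apply (hG hs)]
        exact lintegral_congr fun x =>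
          Measure.map_apply (hg.comp measurable_prodMk_left) (measurable_prodMk_left hs)
    _ = ∫⁻ ω, (μ.map fun x => (x, g x ω)) s ∂ν := by
        rw [Measure.prod_apply_symm (hG hs)]
        exact lintegral_congr fun ω => (Measure.map_apply (hG.comp measurable_prodMk_right) hs).symm

theorem stmt12_general {X Y : Type*}
    [MeasurableSpace X]
    [TopologicalSpace Y] [PolishSpace Y] [MeasurableSpace Y] [BorelSpace Y]
    (μ : ProbabilityMeasure X) (P : ProbabilityMeasure (X × Y))
    (hP : (P : Measure (X × Y)).map Prod.fst = (μ : Measure X)) :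
    ∃ f : X → ℝ → Y,
      Measurable (fun p : X × ℝ => f p.1 p.2) ∧
      ∀ s : Set (X × Y), MeasurableSet s →
        (P : Measure (X × Y)) s
          = ∫⁻ u in Set.Icc (0 : ℝ) 1,
              ((μ : Measure X).map fun x => (x, f x u)) s := by
  have : Nonempty Y := (nonempty_prod.1 P.nonempty).2
  obtain ⟨f, hf, hfκ⟩ := (P : Measure (X × Y)).condKernel.exists_measurable_map_volume_Ioo_eq
  refine ⟨f, hf, fun s hs => ?_⟩
  rw [← Measure.restrict_congr_set Ioo_ae_eq_Icc,
    ← Measure.compProd_apply_eq_lintegral_map_graph _ _ _ hf hfκ hs,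
    ← hP, ← Measure.fst, Measure.disintegrate]

/-- Proposition 5.5: every `P ∈ Π(μ)` is a mixture `P = ∫₀¹ P_u du` of graph measures
`P_u(dx,dy) = μ(dx) δ_{f(x,u)}(dy)` for a jointly measurable `f : X × [0,1] → Y`. -/
theorem stmt12 {X Y : Type*}
    [TopologicalSpace X] [PolishSpace X] [MeasurableSpace X] [BorelSpace X]
    [TopologicalSpace Y] [PolishSpace Y] [MeasurableSpace Y] [BorelSpace Y]
    (μ : ProbabilityMeasure X) (P : ProbabilityMeasure (X × Y))
    (hP : (P : Measure (X × Y)).map Prod.fst = (μ : Measure X)) :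
    ∃ f : X → ℝ → Y,
      Measurable (fun p : X × ℝ => f p.1 p.2) ∧
      ∀ s : Set (X × Y), MeasurableSet s →
        (P : Measure (X × Y)) s
          = ∫⁻ u in Set.Icc (0 : ℝ) 1,
              ((μ : Measure X).map fun x => (x, f x u)) s :=
  stmt12_general μ P hP
end
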